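/- Let E₁E₂E₃ be a fixed nondegenerate triangle in the real affine plane, and let A and B be triangles homothetic to E with barycentric coordinates (α₁,α₂,α₃) and (β₁,β₂,β₃) respectively, where a = α₁+α₂+α₃ ≠ 0, b = β₁+β₂+β₃ ≠ 0, and a+b ≠ 0. Define C₃ = (a·A₁ + b·B₂)/(a+b), C₁ = (a·A₂ + b·B₃)/(a+b), C₂ = (a·A₃ + b·B₁)/(a+b), so that, e.g., C₃ is the point dividing segment A₁B₂ with a·(C₃ − A₁) = b·(B₂ − C₃). Then the triangle C₁C₂C₃ is homothetic to E with barycentric coordinates (−(α₁+β₁), −(α₂+β₂), −(α₃+β₃)). -/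
import Mathlib


/-- A triangle in `ℝ²` (vertices indexed by `Fin 3`) is nondegenerate. -/
def Nondeg (T : Fin 3 → (Fin 2 → ℝ)) : Prop :=
  ¬ Collinear ℝ ({T 0, T 1, T 2} : Set (Fin 2 → ℝ))

/-- The triangle `D` is homothetic to the reference triangle `E` and has
barycentric coordinates `δ`: the homothety ratio from `D` to `E` equals
`δ 0 + δ 1 + δ 2 ≠ 0`, and the centroid of `D` has barycentric coordinates
`δ i / (δ 0 + δ 1 + δ 2)` with respect to `E`. -/
def HasCoords (E D : Fin 3 → (Fin 2 → ℝ)) (δ : Fin 3 → ℝ) : Prop :=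
  δ 0 + δ 1 + δ 2 ≠ 0 ∧
  (∃ t : Fin 2 → ℝ, ∀ i, (δ 0 + δ 1 + δ 2) • D i + t = E i) ∧
  (1/3 : ℝ) • (D 0 + D 1 + D 2) =
    (δ 0 / (δ 0 + δ 1 + δ 2)) • E 0 + (δ 1 / (δ 0 + δ 1 + δ 2)) • E 1 +
      (δ 2 / (δ 0 + δ 1 + δ 2)) • E 2

/-- The pre-sum of two triangles:  if `A`, `B` have barycentric coordinates
`α`, `β` (with `a = Σα`, `b = Σβ`, `a + b ≠ 0`) and `C₃ = (a•A₁+b•B₂)/(a+b)`,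
`C₁ = (a•A₂+b•B₃)/(a+b)`, `C₂ = (a•A₃+b•B₁)/(a+b)`, then `C` is homothetic to
`E` with barycentric coordinates `−(α+β)`. -/
theorem presum_coordinates
    (E A B C : Fin 3 → (Fin 2 → ℝ)) (α β : Fin 3 → ℝ) (a b : ℝ)
    (hE : Nondeg E)
    (ha : a = α 0 + α 1 + α 2) (hb : b = β 0 + β 1 + β 2)
    (hA : HasCoords E A α) (hB : HasCoords E B β)
    (hab : a + b ≠ 0)
    (hC3 : C 2 = (a + b)⁻¹ • (a • A 0 + b • B 1))
    (hC1 : C 0 = (a + b)⁻¹ • (a • A 1 + b • B 2))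
    (hC2 : C 1 = (a + b)⁻¹ • (a • A 2 + b • B 0)) :
    HasCoords E C (fun i => -(α i + β i)) := by
  obtain ⟨haA, ⟨tA, htA⟩, hgA⟩ := hA
  obtain ⟨hbB, ⟨tB, htB⟩, hgB⟩ := hB
  have ha0 : a ≠ 0 := ha ▸ haA
  have hb0 : b ≠ 0 := hb ▸ hbB
  have hsum : -(α 0 + β 0) + -(α 1 + β 1) + -(α 2 + β 2) = -(a + b) := by
    rw [ha, hb]; ring
  have hab' : (-(a+b) : ℝ) ≠ 0 := neg_ne_zero.mpr hab
  refine ⟨by rw [hsum]; exact hab', ⟨E 0 + E 1 + E 2 - tA - tB, ?_⟩, ?_⟩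
  · intro i
    funext j
    have hA0 := congrFun (htA 0) j
    have hA1 := congrFun (htA 1) j
    have hA2 := congrFun (htA 2) j
    have hB0 := congrFun (htB 0) j
    have hB1 := congrFun (htB 1) j
    have hB2 := congrFun (htB 2) j
    have c1 := congrFun hC1 j
    have c2 := congrFun hC2 j
    have c3 := congrFun hC3 j
    simp only [Pi.add_apply, Pi.smul_apply, Pi.sub_apply, smul_eq_mul] at *
    rw [← ha] at hA0 hA1 hA2
    rw [← hb] at hB0 hB1 hB2
    field_simp at c1 c2 c3
    fin_cases i <;>
      simp only [Fin.zero_eta, Fin.mk_one, Fin.reduceFinMk, Pi.add_apply, Pi.smul_apply,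
        Pi.sub_apply, smul_eq_mul, hsum]
    · linear_combination - c1 - hA1 - hB2
    · linear_combination - c2 - hA2 - hB0
    · linear_combination - c3 - hA0 - hB1
  · funext j
    have hA0 := congrFun (htA 0) j
    have hA1 := congrFun (htA 1) j
    have hA2 := congrFun (htA 2) j
    have hB0 := congrFun (htB 0) j
    have hB1 := congrFun (htB 1) j
    have hB2 := congrFun (htB 2) j
    have c1 := congrFun hC1 j
    have c2 := congrFun hC2 j
    have c3 := congrFun hC3 j
    have gA := congrFun hgA j
    have gB := congrFun hgB j
    simp only [Pi.add_apply, Pi.smul_apply, Pi.sub_apply, smul_eq_mul] at *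
    rw [← ha] at hA0 hA1 hA2 gA
    rw [← hb] at hB0 hB1 hB2 gB
    simp only [hsum, neg_div_neg_eq]
    field_simp at c1 c2 c3 gA gB ⊢
    linear_combination c1 + c2 + c3 + gA + gB
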